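/- arXiv:1106.1085 — 4 statements merged into one kernel-verified Lean document; each statement's English description precedes it below -/
import Mathlib

section
/- For odd n > 5, there exists an edge-friendly labeling f of K_{n,n-2} with |v_f(0) − v_f(1)| = 2n − 8 (achieved with exactly three vertices receiving the minority label). -/
open Finset

/-- Edges of the complete bipartite graph `K_{m,n}` are modeled as pairs in
`Fin m × Fin n`; an edge labeling assigns `true` (label 1) or `false` (label 0). -/
def eCount (m n : ℕ) (f : Fin m × Fin n → Bool) (i : Bool) : ℕ :=
  (univ.filter fun p : Fin m × Fin n => f p = i).card

/-- A labeling is edge-friendly if `|e_f(0) - e_f(1)| ≤ 1`. -/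
def edgeFriendly (m n : ℕ) (f : Fin m × Fin n → Bool) : Prop :=
  ((eCount m n f false : ℤ) - eCount m n f true).natAbs ≤ 1

/-- `v_f(i)`: the number of vertices (in either part) incident to strictly more
`i`-labeled edges than `(1-i)`-labeled edges. -/
def vCount (m n : ℕ) (f : Fin m × Fin n → Bool) (i : Bool) : ℕ :=
  (univ.filter fun a : Fin m =>
      (univ.filter fun b => f (a, b) = !i).card <
      (univ.filter fun b => f (a, b) = i).card).card +
  (univ.filter fun b : Fin n =>
      (univ.filter fun a => f (a, b) = !i).card <
      (univ.filter fun a => f (a, b) = i).card).card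

/-- `|v_f(0) - v_f(1)|`. -/
def ebIndex (m n : ℕ) (f : Fin m × Fin n → Bool) : ℕ :=
  ((vCount m n f false : ℤ) - vCount m n f true).natAbs

/-- The edge-balanced index set of `K_{m,n}`. -/
def EBI (m n : ℕ) : Set ℕ :=
  {k | ∃ f : Fin m × Fin n → Bool, edgeFriendly m n f ∧ ebIndex m n f = k}

/-- The condition for an edge `(a, b)` to be labeled `0` (false). -/
def cndB (K a b : ℕ) : Bool :=
  decide (a ≤ 1 ∨ b = 0 ∨ (2 ≤ a ∧ 1 ≤ b ∧
    ((a - 2 < K ∧ b - 1 < K) ∨ (K ≤ a - 2 ∧ a - 2 < 2*K ∧ K ≤ b - 1)) ∧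
    a - 2 ≠ b - 1 ∧ ¬(a = 2 ∧ b = 2)))

/-- Row false-degree. -/
def rc (K a : ℕ) : ℕ :=
  if a ≤ 1 then 2*K+1 else if a = 2 then K-1 else if a ≤ 2*K+1 then K else 1

/-- Column false-degree. -/
def cc (K b : ℕ) : ℕ :=
  if b = 0 then 2*K+3 else if b = 2 then K else K+1

lemma card_fin_filter (N : ℕ) (p : ℕ → Prop) [DecidablePred p] :
    (univ.filter fun x : Fin N => p x.val).card = ((range N).filter p).card := by
  rw [Finset.card_filter, Finset.card_filter,
    Fin.sum_univ_eq_sum_range (fun i => if p i then 1 else 0)]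

lemma rowcard (K : ℕ) (hK : 2 ≤ K) (a : ℕ) (ha : a < 2*K+3) :
    ((range (2*K+1)).filter fun b => cndB K a b = true).card = rc K a := by
  by_cases h1 : a ≤ 1
  · rw [filter_true_of_mem, card_range]
    · simp [rc, h1]
    · intro x _; simp only [cndB, decide_eq_true_eq]; omega
  · by_cases h2 : a = 2
    · subst h2
      have hset : ((range (2*K+1)).filter fun b => cndB K 2 b = true)
          = insert 0 (Ico 3 (K+1)) := by
        ext x
        simp only [true_and, and_true, mem_filter, mem_range, cndB, decide_eq_true_eq, mem_insert, mem_Ico]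
        omega
      have hrc : rc K 2 = K - 1 := by simp [rc]
      rw [hset, card_insert_of_notMem (by simp), Nat.card_Ico, hrc]
      omega
    · by_cases h3 : a ≤ K+1
      · have hset : ((range (2*K+1)).filter fun b => cndB K a b = true)
            = insert 0 ((Ico 1 (K+1)).erase (a-1)) := by
          ext x
          simp only [true_and, and_true, mem_filter, mem_range, cndB, decide_eq_true_eq, mem_insert,
            mem_erase, mem_Ico, ne_eq]
          omega
        have hrc : rc K a = K := by
          unfold rc
          rw [if_neg h1, if_neg h2, if_pos (by omega)]
        rw [hset, card_insert_of_notMem (by simp),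
          card_erase_of_mem (by simp only [mem_Ico]; omega), Nat.card_Ico, hrc]
        omega
      · by_cases h4 : a ≤ 2*K+1
        · have hset : ((range (2*K+1)).filter fun b => cndB K a b = true)
              = insert 0 ((Ico (K+1) (2*K+1)).erase (a-1)) := by
            ext x
            simp only [true_and, and_true, mem_filter, mem_range, cndB, decide_eq_true_eq, mem_insert,
              mem_erase, mem_Ico, ne_eq]
            omega
          have hrc : rc K a = K := by
            unfold rc
            rw [if_neg h1, if_neg h2, if_pos h4]
          rw [hset, card_insert_of_notMem (by simp only [mem_erase, mem_Ico, ne_eq]; omega),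
            card_erase_of_mem (by simp only [mem_Ico]; omega), Nat.card_Ico, hrc]
          omega
        · have hset : ((range (2*K+1)).filter fun b => cndB K a b = true) = {0} := by
            ext x
            simp only [true_and, and_true, mem_filter, mem_range, cndB, decide_eq_true_eq, mem_singleton]
            omega
          have hrc : rc K a = 1 := by
            unfold rc
            rw [if_neg h1, if_neg h2, if_neg h4]
          rw [hset, card_singleton, hrc]

lemma colcard (K : ℕ) (hK : 2 ≤ K) (b : ℕ) (hb : b < 2*K+1) :
    ((range (2*K+3)).filter fun a => cndB K a b = true).card = cc K b := by
  by_cases h0 : b = 0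
  · subst h0
    rw [filter_true_of_mem, card_range]
    · simp [cc]
    · intro x _; simp [cndB]
  · by_cases h2 : b = 2
    · subst h2
      have hset : ((range (2*K+3)).filter fun a => cndB K a 2 = true)
          = insert 0 (insert 1 (Ico 4 (K+2))) := by
        ext x
        simp only [true_and, and_true, mem_filter, mem_range, cndB, decide_eq_true_eq, mem_insert, mem_Ico]
        omega
      have hcc : cc K 2 = K := by simp [cc]
      rw [hset, card_insert_of_notMem (by simp), card_insert_of_notMem (by simp),
        Nat.card_Ico, hcc]
      omega
    · by_cases h3 : b ≤ K
      · have hset : ((range (2*K+3)).filter fun a => cndB K a b = true)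
            = insert 0 (insert 1 ((Ico 2 (K+2)).erase (b+1))) := by
          ext x
          simp only [true_and, and_true, mem_filter, mem_range, cndB, decide_eq_true_eq, mem_insert,
            mem_erase, mem_Ico, ne_eq]
          omega
        have hcc : cc K b = K+1 := by
          unfold cc
          rw [if_neg h0, if_neg h2]
        rw [hset, card_insert_of_notMem (by simp only [mem_insert, mem_erase, mem_Ico, ne_eq]; omega),
          card_insert_of_notMem (by simp only [mem_erase, mem_Ico, ne_eq]; omega),
          card_erase_of_mem (by simp only [mem_Ico]; omega), Nat.card_Ico, hcc]
        omega
      · have hset : ((range (2*K+3)).filter fun a => cndB K a b = true)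
            = insert 0 (insert 1 ((Ico (K+2) (2*K+2)).erase (b+1))) := by
          ext x
          simp only [true_and, and_true, mem_filter, mem_range, cndB, decide_eq_true_eq, mem_insert,
            mem_erase, mem_Ico, ne_eq]
          omega
        have hcc : cc K b = K+1 := by
          unfold cc
          rw [if_neg h0, if_neg h2]
        rw [hset, card_insert_of_notMem (by simp only [mem_insert, mem_erase, mem_Ico, ne_eq]; omega),
          card_insert_of_notMem (by simp only [mem_erase, mem_Ico, ne_eq]; omega),
          card_erase_of_mem (by simp only [mem_Ico]; omega), Nat.card_Ico, hcc]
        omega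

lemma rc_sum (K : ℕ) (hK : 2 ≤ K) :
    ∑ a ∈ range (2*K+3), rc K a = 2*(K*K)+4*K+2 := by
  rw [show 2*K+3 = (2*K+2)+1 from rfl, Finset.sum_range_succ,
    show 2*K+2 = 3+(2*K-1) from by omega, Finset.sum_range_add]
  have h0 : ∑ a ∈ range 3, rc K a = (2*K+1) + (2*K+1) + (K-1) := by
    simp [Finset.sum_range_succ, rc]
  have h1 : ∑ i ∈ range (2*K-1), rc K (3+i) = (2*K-1) * K := by
    rw [Finset.sum_congr rfl (fun i hi => ?_), Finset.sum_const, card_range, smul_eq_mul]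
    simp only [mem_range] at hi
    unfold rc
    rw [if_neg (by omega), if_neg (by omega), if_pos (by omega)]
  have h2 : rc K (3+(2*K-1)) = 1 := by
    unfold rc
    rw [if_neg (by omega), if_neg (by omega), if_neg (by omega)]
  rw [h0, h1, h2]
  obtain ⟨L, rfl⟩ : ∃ L, K = L + 2 := ⟨K - 2, by omega⟩
  rw [show 2*(L+2)-1 = 2*L+3 from by omega, show (L+2)-1 = L+1 from by omega]
  ring

/-- For odd `n > 5`, some edge-friendly labeling of `K_{n,n-2}` achieves
`|v_f(0) - v_f(1)| = 2n - 8`, with exactly three vertices receiving the minority label. -/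
theorem ebi_Knn2_max (n : ℕ) (hn : Odd n) (h5 : 5 < n) :
    ∃ f : Fin n × Fin (n - 2) → Bool, edgeFriendly n (n - 2) f ∧
      ebIndex n (n - 2) f = 2 * n - 8 ∧
      min (vCount n (n - 2) f false) (vCount n (n - 2) f true) = 3 := by
  obtain ⟨K, hK, hn3⟩ : ∃ K, 2 ≤ K ∧ n = 2*K+3 := by
    obtain ⟨m, hm⟩ := hn; exact ⟨m - 1, by omega, by omega⟩
  have h2 : n - 2 = 2*K+1 := by omega
  set f : Fin n × Fin (n - 2) → Bool := fun p => !cndB K p.1.val p.2.val with hfdef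
  have hrowF : ∀ a : Fin n,
      (univ.filter fun b : Fin (n-2) => f (a, b) = false).card = rc K a.val := by
    intro a
    have e1 : (univ.filter fun b : Fin (n-2) => f (a, b) = false)
        = univ.filter fun b : Fin (n-2) => cndB K a.val b.val = true := by
      apply filter_congr; intro b _; simp [hfdef]
    rw [e1, card_fin_filter (n-2) (fun v => cndB K a.val v = true), h2]
    exact rowcard K hK a.val (by have := a.isLt; omega)
  have hrowT : ∀ a : Fin n,
      (univ.filter fun b : Fin (n-2) => f (a, b) = true).card = 2*K+1 - rc K a.val := by
    intro a
    have hpart := Finset.card_filter_add_card_filter_not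
      (s := (univ : Finset (Fin (n-2)))) (p := fun b => f (a, b) = false)
    have e1 : (univ.filter fun b : Fin (n-2) => ¬ (f (a, b) = false))
        = univ.filter fun b : Fin (n-2) => f (a, b) = true := by
      apply filter_congr; intro b _; simp
    rw [e1, hrowF a, card_univ, Fintype.card_fin] at hpart
    omega
  have hcolF : ∀ b : Fin (n-2),
      (univ.filter fun a : Fin n => f (a, b) = false).card = cc K b.val := by
    intro b
    have e1 : (univ.filter fun a : Fin n => f (a, b) = false)
        = univ.filter fun a : Fin n => cndB K a.val b.val = true := by
      apply filter_congr; intro a _; simp [hfdef]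
    have hblt : (b : ℕ) < 2*K+1 := by have := b.isLt; omega
    rw [e1, card_fin_filter n (fun v => cndB K v b.val = true)]
    generalize hgen : (b : ℕ) = w at hblt ⊢
    rw [hn3]
    exact colcard K hK w hblt
  have hcolT : ∀ b : Fin (n-2),
      (univ.filter fun a : Fin n => f (a, b) = true).card = 2*K+3 - cc K b.val := by
    intro b
    have hpart := Finset.card_filter_add_card_filter_not
      (s := (univ : Finset (Fin n))) (p := fun a => f (a, b) = false)
    have e1 : (univ.filter fun a : Fin n => ¬ (f (a, b) = false))
        = univ.filter fun a : Fin n => f (a, b) = true := by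
      apply filter_congr; intro a _; simp
    rw [e1, hcolF b, card_univ, Fintype.card_fin] at hpart
    omega
  have he0 : eCount n (n-2) f false = 2*(K*K)+4*K+2 := by
    unfold eCount
    rw [Finset.card_filter, Fintype.sum_prod_type]
    have hinner : ∀ a : Fin n,
        (∑ b : Fin (n-2), if f (a, b) = false then 1 else 0) = rc K a.val := by
      intro a; rw [← Finset.card_filter]; exact hrowF a
    rw [Finset.sum_congr rfl (fun a _ => hinner a),
      Fin.sum_univ_eq_sum_range (fun v => rc K v), hn3]
    exact rc_sum K hK
  have htot : eCount n (n-2) f false + eCount n (n-2) f true = 4*(K*K)+8*K+3 := by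
    unfold eCount
    have hpart := Finset.card_filter_add_card_filter_not
      (s := (univ : Finset (Fin n × Fin (n-2)))) (p := fun p => f p = false)
    have e1 : (univ.filter fun p : Fin n × Fin (n-2) => ¬ (f p = false))
        = univ.filter fun p : Fin n × Fin (n-2) => f p = true := by
      apply filter_congr; intro p _; simp
    rw [e1, card_univ, Fintype.card_prod, Fintype.card_fin, Fintype.card_fin] at hpart
    have hmul : n * (n - 2) = 4*(K*K)+8*K+3 := by rw [h2, hn3]; ring
    rw [hmul] at hpart
    exact hpart
  have he10 : eCount n (n-2) f false = eCount n (n-2) f true + 1 := by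
    obtain ⟨Q, hQ⟩ : ∃ Q, K*K = Q := ⟨_, rfl⟩
    rw [hQ] at he0 htot
    omega
  have hv0 : vCount n (n-2) f false = 3 := by
    unfold vCount
    simp only [Bool.not_false]
    have eA : (univ.filter fun a : Fin n =>
        (univ.filter fun b => f (a, b) = true).card <
        (univ.filter fun b => f (a, b) = false).card)
        = univ.filter fun a : Fin n => 2*K+1 - rc K a.val < rc K a.val :=
      filter_congr fun a _ => by rw [hrowT a, hrowF a]
    have eB : (univ.filter fun b : Fin (n-2) =>
        (univ.filter fun a => f (a, b) = true).card <
        (univ.filter fun a => f (a, b) = false).card)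
        = univ.filter fun b : Fin (n-2) => 2*K+3 - cc K b.val < cc K b.val :=
      filter_congr fun b _ => by rw [hcolT b, hcolF b]
    rw [eA, eB, card_fin_filter n (fun v => 2*K+1 - rc K v < rc K v),
      card_fin_filter (n-2) (fun v => 2*K+3 - cc K v < cc K v), h2, hn3]
    have sA : (range (2*K+3)).filter (fun v => 2*K+1 - rc K v < rc K v) = {0, 1} := by
      ext x
      rw [mem_filter]
      simp only [mem_filter, mem_range, mem_insert, mem_singleton, rc]
      split_ifs <;> omega
    have sB : (range (2*K+1)).filter (fun v => 2*K+3 - cc K v < cc K v) = {0} := by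
      ext x
      rw [mem_filter]
      simp only [mem_filter, mem_range, mem_singleton, cc]
      split_ifs <;> omega
    rw [sA, sB, card_singleton, card_insert_of_notMem (by simp), card_singleton]
  have hv1 : vCount n (n-2) f true = 4*K+1 := by
    unfold vCount
    simp only [Bool.not_true]
    have eA : (univ.filter fun a : Fin n =>
        (univ.filter fun b => f (a, b) = false).card <
        (univ.filter fun b => f (a, b) = true).card)
        = univ.filter fun a : Fin n => rc K a.val < 2*K+1 - rc K a.val :=
      filter_congr fun a _ => by rw [hrowT a, hrowF a]
    have eB : (univ.filter fun b : Fin (n-2) =>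
        (univ.filter fun a => f (a, b) = false).card <
        (univ.filter fun a => f (a, b) = true).card)
        = univ.filter fun b : Fin (n-2) => cc K b.val < 2*K+3 - cc K b.val :=
      filter_congr fun b _ => by rw [hcolT b, hcolF b]
    rw [eA, eB, card_fin_filter n (fun v => rc K v < 2*K+1 - rc K v),
      card_fin_filter (n-2) (fun v => cc K v < 2*K+3 - cc K v), h2, hn3]
    have sA : (range (2*K+3)).filter (fun v => rc K v < 2*K+1 - rc K v) = Ico 2 (2*K+3) := by
      ext x
      rw [mem_filter]
      simp only [mem_filter, mem_range, mem_Ico, rc]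
      split_ifs <;> omega
    have sB : (range (2*K+1)).filter (fun v => cc K v < 2*K+3 - cc K v) = Ico 1 (2*K+1) := by
      ext x
      rw [mem_filter]
      simp only [mem_filter, mem_range, mem_Ico, cc]
      split_ifs <;> omega
    rw [sA, sB, Nat.card_Ico, Nat.card_Ico]
    omega
  refine ⟨f, ?_, ?_, ?_⟩
  · unfold edgeFriendly
    omega
  · unfold ebIndex
    rw [hv0, hv1]
    omega
  · rw [hv0, hv1]
    omega
end

section
/- Let n be odd and 1 ≤ a ≤ (n−3)/4. In K_{n,n-2a}, any 0-1 edge labeling in which all vertices except one vertex u in the smaller part and one vertex v in the larger part are incident to strictly more 1-edges than 0-edges satisfies e_f(1) − e_f(0) ≥ 2a − 1; in particular, for a > 1 no such labeling is edge-friendly. -/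
open Finset

/-- In `K_{n,n-2a}` (n odd, `1 ≤ a`, `4a + 3 ≤ n`): if all vertices except one
vertex `u` of the smaller part and one vertex `v` of the larger part are
incident to strictly more 1-edges than 0-edges, then
`e_f(1) - e_f(0) ≥ 2a - 1`; in particular for `a > 1` the labeling is not
edge-friendly. -/
theorem two_dense_general (n a : ℕ) (hn : Odd n) (ha : 1 ≤ a) (han : 4 * a + 3 ≤ n)
    (f : Fin n × Fin (n - 2 * a) → Bool) (v : Fin n) (u : Fin (n - 2 * a))
    (hv : ¬ ((univ.filter fun b => f (v, b) = false).card <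
            (univ.filter fun b => f (v, b) = true).card))
    (hu : ¬ ((univ.filter fun x => f (x, u) = false).card <
            (univ.filter fun x => f (x, u) = true).card))
    (hB : ∀ x : Fin n, x ≠ v →
      (univ.filter fun b => f (x, b) = false).card <
      (univ.filter fun b => f (x, b) = true).card)
    (hA : ∀ b : Fin (n - 2 * a), b ≠ u →
      (univ.filter fun x => f (x, b) = false).card <
      (univ.filter fun x => f (x, b) = true).card) :
    (2 * (a : ℤ) - 1) ≤ (eCount n (n - 2 * a) f true : ℤ) - eCount n (n - 2 * a) f false ∧
      (1 < a → ¬ edgeFriendly n (n - 2 * a) f) := by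
  have hm : 2 * a ≤ n := by omega
  have key : (2 * (a : ℤ) - 1) ≤
      (eCount n (n - 2 * a) f true : ℤ) - eCount n (n - 2 * a) f false := by
    have hsum : ∀ i : Bool, eCount n (n - 2 * a) f i =
        ∑ x : Fin n, (univ.filter fun b => f (x, b) = i).card := by
      intro i
      rw [eCount, Finset.card_filter, Fintype.sum_prod_type]
      exact Finset.sum_congr rfl fun x _ => (Finset.card_filter _ _).symm
    rw [hsum, hsum]
    push_cast
    rw [← Finset.sum_sub_distrib]
    rw [Finset.sum_eq_sum_sdiff_singleton_add (Finset.mem_univ v)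
      (fun x => ((univ.filter fun b => f (x, b) = true).card : ℤ) -
        (univ.filter fun b => f (x, b) = false).card)]
    have h1 : ∀ x ∈ univ \ {v}, (1 : ℤ) ≤
        ((univ.filter fun b => f (x, b) = true).card : ℤ) -
        (univ.filter fun b => f (x, b) = false).card := by
      intro x hx
      have hxv : x ≠ v := by simpa using (Finset.mem_sdiff.mp hx).2
      have := hB x hxv
      omega
    have hlow : ((univ \ {v} : Finset (Fin n)).card : ℤ) ≤
        ∑ x ∈ univ \ {v}, (((univ.filter fun b => f (x, b) = true).card : ℤ) -
          (univ.filter fun b => f (x, b) = false).card) := by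
      calc ((univ \ {v} : Finset (Fin n)).card : ℤ)
          = ∑ _x ∈ univ \ {v}, (1 : ℤ) := by simp
        _ ≤ _ := Finset.sum_le_sum h1
    have hcard : (univ \ {v} : Finset (Fin n)).card = n - 1 := by
      rw [Finset.card_sdiff_of_subset (by simp)]
      simp
    have hsv : (univ.filter fun b => f (v, b) = false).card ≤ n - 2 * a := by
      calc (univ.filter fun b => f (v, b) = false).card
          ≤ (univ : Finset (Fin (n - 2 * a))).card := Finset.card_filter_le _ _
        _ = n - 2 * a := by simp
    have htv : (0 : ℤ) ≤ ((univ.filter fun b => f (v, b) = true).card : ℤ) := by positivity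
    rw [hcard] at hlow
    have hn1 : ((n - 1 : ℕ) : ℤ) = (n : ℤ) - 1 := by omega
    have hn2 : ((n - 2 * a : ℕ) : ℤ) = (n : ℤ) - 2 * a := by omega
    omega
  refine ⟨key, fun ha1 hf => ?_⟩
  unfold edgeFriendly at hf
  omega
end

section
/- For odd n > 5 and 1 ≤ a ≤ (n−3)/4, there exists an edge-friendly labeling of K_{n,n-2a} achieving |v_f(0) − v_f(1)| = 2n − 2a − 6. -/
open Finset

set_option linter.unusedSectionVars false

namespace EBImax

lemma card_filter_fin (N : ℕ) (P : ℕ → Prop) [DecidablePred P] :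
    (univ.filter fun j : Fin N => P j.val).card = ((range N).filter P).card := by
  apply Finset.card_bij (fun j _ => j.val)
  · intro j hj
    simp only [mem_filter, mem_univ, true_and] at hj
    simp [mem_filter, mem_range, j.isLt, hj]
  · intro j1 _ j2 _ h; exact Fin.ext h
  · intro c hc
    simp only [mem_filter, mem_range] at hc
    exact ⟨⟨c, hc.1⟩, by simp [hc.2], rfl⟩

lemma shift_count (d M : ℕ) (Q : ℕ → Prop) [DecidablePred Q] :
    ((range (d + M)).filter (fun j => j < d ∨ Q (j - d))).card
      = d + ((range M).filter Q).card := by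
  have hset : (range (d + M)).filter (fun j => j < d ∨ Q (j - d))
      = range d ∪ (((range M).filter Q).image (· + d)) := by
    ext j
    simp only [mem_filter, mem_range, mem_union, mem_image]
    constructor
    · rintro ⟨hj, h | h⟩
      · exact Or.inl h
      · by_cases hd : j < d
        · exact Or.inl hd
        · exact Or.inr ⟨j - d, ⟨by omega, h⟩, by omega⟩
    · rintro (h | ⟨c, ⟨hc, hQ⟩, rfl⟩)
      · exact ⟨by omega, Or.inl h⟩
      · refine ⟨by omega, Or.inr ?_⟩
        have : c + d - d = c := by omega
        rwa [this]
  rw [hset, card_union_of_disjoint, card_range, card_image_of_injective]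
  · exact fun x y h => by omega
  · rw [Finset.disjoint_left]
    rintro x hx hx2
    simp only [mem_range] at hx
    simp only [mem_image, mem_filter, mem_range] at hx2
    omega


variable (m a : ℕ)

def CC : ℕ := 2*m - 2*a
def qR : ℕ := m - a - 1
def ss : ℕ := m + 2 - 2*a
def kk (r : ℕ) : ℕ := qR m a - if r < ss m a then 1 else 0
def S : ℕ → ℕ
  | 0 => 0
  | r+1 => S r + kk m a r

def inSub (r c : ℕ) : Prop :=
  ∃ t ∈ Finset.Ico (S m a r) (S m a (r+1)), t % CC m a = c

instance (r c : ℕ) : Decidable (inSub m a r c) := by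
  unfold inSub; infer_instance

def lab (p : Fin (2*m+1) × Fin (2*m+1-2*a)) : Bool :=
  if p.1.val < 2 ∨ p.2.val = 0 then false
  else if inSub m a (p.1.val - 2) (p.2.val - 1) then false else true

-- row count inside subgrid
lemma rowcount (hc : 0 < CC m a) (hk : ∀ r, kk m a r ≤ CC m a) (r : ℕ) :
    ((range (CC m a)).filter (inSub m a r)).card = kk m a r := by
  have hS : S m a (r+1) = S m a r + kk m a r := rfl
  have : ((range (CC m a)).filter (inSub m a r)).card
      = (Finset.Ico (S m a r) (S m a (r+1))).card := by
    symm
    apply Finset.card_bij (fun t _ => t % CC m a)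
    · intro t ht
      simp only [mem_filter, mem_range]
      exact ⟨Nat.mod_lt _ hc, ⟨t, ht, rfl⟩⟩
    · intro t1 h1 t2 h2 h
      simp only [mem_Ico, hS] at h1 h2
      have := hk r
      rcases le_or_gt t1 t2 with hle | hlt
      · have : (CC m a) ∣ t2 - t1 := (Nat.modEq_iff_dvd' hle).mp h
        rcases this with ⟨c, hc2⟩
        cases c with
        | zero => omega
        | succ c =>
          have : CC m a ≤ CC m a * (c+1) := Nat.le_mul_of_pos_right _ (by omega)
          omega
      · have hle : t2 ≤ t1 := le_of_lt hlt
        have : (CC m a) ∣ t1 - t2 := (Nat.modEq_iff_dvd' hle).mp h.symm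
        rcases this with ⟨c, hc2⟩
        cases c with
        | zero => omega
        | succ c =>
          have : CC m a ≤ CC m a * (c+1) := Nat.le_mul_of_pos_right _ (by omega)
          omega
    · intro c hcm
      simp only [mem_filter, mem_range] at hcm
      obtain ⟨t, ht, htc⟩ := hcm.2
      exact ⟨t, ht, htc⟩
  rw [this, Nat.card_Ico, hS]; omega

lemma S_eq_sum : ∀ r, S m a r = ∑ i ∈ range r, kk m a i := by
  intro r
  induction r with
  | zero => rfl
  | succ r ih => rw [Finset.sum_range_succ, ← ih]; rfl

-- partition of range (S R) into the Ico blocks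
lemma sum_blocks (P : ℕ → Prop) [DecidablePred P] :
    ∀ R, ∑ r ∈ range R, ((Finset.Ico (S m a r) (S m a (r+1))).filter P).card
      = ((range (S m a R)).filter P).card := by
  intro R
  induction R with
  | zero => simp [S]
  | succ R ih =>
    rw [Finset.sum_range_succ, ih]
    have h1 : S m a R ≤ S m a (R+1) := by
      have : S m a (R+1) = S m a R + kk m a R := rfl
      omega
    rw [range_eq_Ico, range_eq_Ico,
      ← Finset.Ico_union_Ico_eq_Ico (Nat.zero_le (S m a R)) h1, filter_union,
      card_union_of_disjoint]
    exact Finset.disjoint_filter_filter (Finset.Ico_disjoint_Ico_consecutive _ _ _)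

-- column count bound
lemma colcount_le (R qc : ℕ) (hSR : S m a R ≤ CC m a * qc) (c : ℕ) (hc : c < CC m a) :
    ((range R).filter (fun r => inSub m a r c)).card ≤ qc := by
  have step1 : ((range R).filter (fun r => inSub m a r c)).card
      ≤ ∑ r ∈ range R, ((Finset.Ico (S m a r) (S m a (r+1))).filter (fun t => t % CC m a = c)).card := by
    rw [Finset.card_filter]
    apply Finset.sum_le_sum
    intro r _
    by_cases h : inSub m a r c
    · simp only [h, if_true]
      obtain ⟨t, ht, htc⟩ := h
      exact Finset.card_pos.mpr ⟨t, mem_filter.mpr ⟨ht, htc⟩⟩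
    · simp [h]
  have step2 := sum_blocks m a (fun t => t % CC m a = c) R
  have step3 : ((range (S m a R)).filter (fun t => t % CC m a = c)).card
      ≤ ((range (CC m a * qc)).filter (fun t => t % CC m a = c)).card := by
    apply Finset.card_le_card
    apply Finset.filter_subset_filter
    exact Finset.range_subset_range.mpr hSR
  have step4 : ((range (CC m a * qc)).filter (fun t => t % CC m a = c)).card = qc := by
    have h4 : (range qc).card = ((range (CC m a * qc)).filter (fun t => t % CC m a = c)).card := by
      apply Finset.card_bij (fun j _ => c + CC m a * j)
      · intro j hj
        simp only [mem_range] at hj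
        simp only [mem_filter, mem_range]
        constructor
        · calc c + CC m a * j < CC m a + CC m a * j := by omega
            _ = CC m a * (j+1) := by ring
            _ ≤ CC m a * qc := Nat.mul_le_mul_left _ (by omega)
        · simp [Nat.add_mul_mod_self_left, Nat.mod_eq_of_lt hc]
      · intro j1 _ j2 _ h
        exact Nat.eq_of_mul_eq_mul_left (by omega) (by omega : CC m a * j1 = CC m a * j2)
      · intro t ht
        simp only [mem_filter, mem_range] at ht
        refine ⟨t / CC m a, ?_, ?_⟩
        · simp only [mem_range]
          exact Nat.div_lt_of_lt_mul (by omega)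
        · have := Nat.div_add_mod t (CC m a)
          omega
    rw [← h4, card_range]
  omega

lemma sum_kk (ha : 1 ≤ a) (hm : 2*a+1 ≤ m) :
    ∑ r ∈ range (2*m-1), kk m a r
      = (2*m-1)*(qR m a - 1) + ((2*m-1) - ss m a) := by
  have hq : 1 ≤ qR m a := by unfold qR; omega
  have hs : ss m a ≤ 2*m-1 := by unfold ss; omega
  have hk : ∀ r, kk m a r = (qR m a - 1) + (if r < ss m a then 0 else 1) := by
    intro r; unfold kk; split <;> omega
  rw [Finset.sum_congr rfl (fun r _ => hk r), Finset.sum_add_distrib,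
    Finset.sum_const, card_range, smul_eq_mul]
  congr 1
  have : ∑ r ∈ range (2*m-1), (if r < ss m a then 0 else 1)
      = ((range (2*m-1)).filter (fun r => ¬ r < ss m a)).card := by
    rw [Finset.card_filter]
    apply Finset.sum_congr rfl
    intro r _
    by_cases h : r < ss m a <;> simp [h]
  rw [this]
  have : (range (2*m-1)).filter (fun r => ¬ r < ss m a) = Finset.Ico (ss m a) (2*m-1) := by
    ext r; simp only [mem_filter, mem_range, mem_Ico]; omega
  rw [this, Nat.card_Ico]

lemma arith_SR (ha : 1 ≤ a) (hm : 2*a+1 ≤ m) :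
    (2*m-1)*(qR m a - 1) + ((2*m-1) - ss m a) ≤ CC m a * (m-2) := by
  unfold qR ss CC
  zify [show a ≤ m by omega, show 1 ≤ m - a by omega, show 1 ≤ m - a - 1 by omega,
    show 2*a ≤ m + 2 by omega, show m + 2 - 2*a ≤ 2*m-1 by omega,
    show 2*a ≤ 2*m by omega, show 2 ≤ m by omega, show 1 ≤ 2*m by omega]
  nlinarith [sq_nonneg ((m:ℤ) - a)]

lemma bool_split {α : Type*} [Fintype α] [DecidableEq α] (g : α → Bool) :
    (univ.filter fun x => g x = false).card + (univ.filter fun x => g x = true).card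
      = Fintype.card α := by
  classical
  have h := Finset.card_filter_add_card_filter_not (s := (univ : Finset α))
    (p := fun x => g x = false)
  have e : (univ.filter fun x => ¬ g x = false) = (univ.filter fun x => g x = true) := by
    apply Finset.filter_congr
    intro x _
    simp
  rw [e] at h
  simpa using h

lemma eCount_eq (M N : ℕ) (f : Fin M × Fin N → Bool) (i : Bool) :
    eCount M N f i = ∑ x : Fin M, (univ.filter fun y => f (x,y) = i).card := by
  unfold eCount
  rw [Finset.card_eq_sum_card_fiberwise (f := fun p => p.1) (t := univ) (fun p _ => mem_univ _)]
  apply Finset.sum_congr rfl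
  intro x _
  apply Finset.card_bij (fun p _ => p.2)
  · intro p hp
    simp only [mem_filter, mem_univ, true_and] at hp ⊢
    have : p = (x, p.2) := by
      ext <;> simp [hp.2]
    rw [← this]; exact hp.1
  · intro p1 h1 p2 h2 h
    simp only [mem_filter, mem_univ, true_and] at h1 h2
    ext
    · rw [h1.2, h2.2]
    · exact congrArg Fin.val h
  · intro y hy
    simp only [mem_filter, mem_univ, true_and] at hy
    exact ⟨(x, y), by simp [hy], rfl⟩

section Main

variable (ha : 1 ≤ a) (hm : 2*a+1 ≤ m)
include ha hm

lemma N_eq : 2*m+1-2*a = CC m a + 1 := by unfold CC; omega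

lemma row_zeros_small (x : Fin (2*m+1)) (hx : x.val < 2) :
    (univ.filter fun y : Fin (2*m+1-2*a) => lab m a (x,y) = false).card = 2*m+1-2*a := by
  have : (univ.filter fun y : Fin (2*m+1-2*a) => lab m a (x,y) = false) = univ := by
    apply Finset.filter_true_of_mem
    intro y _
    unfold lab
    simp [hx]
  rw [this, card_univ, Fintype.card_fin]

lemma row_zeros_big (x : Fin (2*m+1)) (hx : 2 ≤ x.val) :
    (univ.filter fun y : Fin (2*m+1-2*a) => lab m a (x,y) = false).card
      = 1 + kk m a (x.val - 2) := by
  have hcong : ∀ y : Fin (2*m+1-2*a),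
      (lab m a (x,y) = false) ↔ (y.val < 1 ∨ inSub m a (x.val - 2) (y.val - 1)) := by
    intro y
    unfold lab
    by_cases h0 : y.val = 0
    · simp [h0]
    · have : ¬ (x.val < 2 ∨ y.val = 0) := by omega
      rw [if_neg this]
      by_cases h2 : inSub m a (x.val - 2) (y.val - 1)
      · simp [h2]
      · simp [h2]
        omega
  rw [Finset.filter_congr (fun y _ => by rw [hcong y])]
  rw [card_filter_fin (2*m+1-2*a) (fun j => j < 1 ∨ inSub m a (x.val - 2) (j - 1))]
  rw [show (2*m+1-2*a) = 1 + CC m a by unfold CC; omega]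
  rw [shift_count 1 (CC m a) (inSub m a (x.val - 2))]
  rw [rowcount m a (by unfold CC; omega) (fun r => by unfold kk qR CC; omega)]

lemma col_zeros_small (y : Fin (2*m+1-2*a)) (hy : y.val = 0) :
    (univ.filter fun x : Fin (2*m+1) => lab m a (x,y) = false).card = 2*m+1 := by
  have : (univ.filter fun x : Fin (2*m+1) => lab m a (x,y) = false) = univ := by
    apply Finset.filter_true_of_mem
    intro x _
    unfold lab
    simp [hy]
  rw [this, card_univ, Fintype.card_fin]

lemma col_zeros_big (y : Fin (2*m+1-2*a)) (hy : 1 ≤ y.val) :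
    (univ.filter fun x : Fin (2*m+1) => lab m a (x,y) = false).card
      = 2 + ((range (2*m-1)).filter (fun r => inSub m a r (y.val - 1))).card := by
  have hy0 : ¬ y.val = 0 := by omega
  have hcong : ∀ x : Fin (2*m+1),
      (lab m a (x,y) = false) ↔ (x.val < 2 ∨ inSub m a (x.val - 2) (y.val - 1)) := by
    intro x
    unfold lab
    by_cases h0 : x.val < 2
    · simp [h0]
    · have : ¬ (x.val < 2 ∨ y.val = 0) := by omega
      rw [if_neg this]
      by_cases h2 : inSub m a (x.val - 2) (y.val - 1)
      · simp [h2]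
      · simp [h2]
        omega
  rw [Finset.filter_congr (fun x _ => by rw [hcong x])]
  rw [card_filter_fin (2*m+1) (fun i => i < 2 ∨ inSub m a (i - 2) (y.val - 1))]
  rw [show range (2*m+1) = range (2 + (2*m-1)) by congr 1; omega]
  rw [shift_count 2 (2*m-1) (fun r => inSub m a r (y.val - 1))]

lemma col_zeros_le (y : Fin (2*m+1-2*a)) (hy : 1 ≤ y.val) :
    (univ.filter fun x : Fin (2*m+1) => lab m a (x,y) = false).card ≤ m := by
  rw [col_zeros_big m a ha hm y hy]
  have hc : y.val - 1 < CC m a := by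
    have := y.isLt
    unfold CC
    omega
  have hSR : S m a (2*m-1) ≤ CC m a * (m-2) := by
    rw [S_eq_sum, sum_kk m a ha hm]
    exact arith_SR m a ha hm
  have := colcount_le m a (2*m-1) (m-2) hSR (y.val - 1) hc
  omega

lemma arith_e0 :
    2 * (2*(2*m+1-2*a) + (2*m-1) + ((2*m-1)*(qR m a - 1) + ((2*m-1) - ss m a))) + 1
      = (2*m+1) * (2*m+1-2*a) := by
  unfold qR ss
  zify [show a ≤ m by omega, show 1 ≤ m - a by omega, show 1 ≤ m - a - 1 by omega,
    show 2*a ≤ m + 2 by omega, show m + 2 - 2*a ≤ 2*m-1 by omega,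
    show 2*a ≤ 2*m by omega, show 2 ≤ m by omega, show 1 ≤ 2*m by omega,
    show 2*a ≤ 2*m+1 by omega]
  ring

lemma eCount_false_val :
    eCount (2*m+1) (2*m+1-2*a) (lab m a) false
      = 2*(2*m+1-2*a) + (2*m-1) + ((2*m-1)*(qR m a - 1) + ((2*m-1) - ss m a)) := by
  rw [eCount_eq]
  have hrow : ∀ x : Fin (2*m+1),
      (univ.filter fun y => lab m a (x,y) = false).card
        = if x.val < 2 then 2*m+1-2*a else 1 + kk m a (x.val - 2) := by
    intro x
    by_cases hx : x.val < 2
    · rw [if_pos hx, row_zeros_small m a ha hm x hx]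
    · rw [if_neg hx, row_zeros_big m a ha hm x (by omega)]
  rw [Finset.sum_congr rfl (fun x _ => hrow x)]
  rw [Fin.sum_univ_eq_sum_range (fun i => if i < 2 then 2*m+1-2*a else 1 + kk m a (i - 2))]
  have h2n : 2 ≤ 2*m+1 := by omega
  have hsplit : ∑ i ∈ range (2*m+1), (if i < 2 then (2*m+1-2*a) else 1 + kk m a (i-2))
      = 2*(2*m+1-2*a) + ∑ i ∈ Finset.Ico 2 (2*m+1), (1 + kk m a (i-2)) := by
    rw [range_eq_Ico, ← Finset.sum_Ico_consecutive _ (Nat.zero_le 2) h2n]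
    congr 1
    · rw [show Finset.Ico 0 2 = ({0,1} : Finset ℕ) by decide]
      rw [Finset.sum_pair (by omega)]
      norm_num
      omega
    · apply Finset.sum_congr rfl
      intro i hi
      simp only [mem_Ico] at hi
      rw [if_neg (by omega)]
  rw [hsplit]
  have hIco : ∑ i ∈ Finset.Ico 2 (2*m+1), (1 + kk m a (i-2))
      = (2*m-1) + ∑ r ∈ range (2*m-1), kk m a r := by
    have h1 : ∑ i ∈ Finset.Ico 2 (2*m+1), (1 + kk m a (i-2))
        = ∑ i ∈ Finset.Ico 2 (2*m+1), 1 + ∑ i ∈ Finset.Ico 2 (2*m+1), kk m a (i-2) :=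
      Finset.sum_add_distrib
    have h2 : ∑ _i ∈ Finset.Ico 2 (2*m+1), (1:ℕ) = 2*m-1 := by
      rw [Finset.sum_const, Nat.card_Ico, smul_eq_mul, mul_one]
      omega
    have h3 : ∑ i ∈ Finset.Ico 2 (2*m+1), kk m a (i-2) = ∑ r ∈ range (2*m-1), kk m a r := by
      rw [Finset.sum_Ico_eq_sum_range]
      apply Finset.sum_congr (by congr 1)
      intro i _
      congr 1
      omega
    rw [h1, h2, h3]
  rw [hIco, sum_kk m a ha hm]
  omega

lemma eCount_total :
    eCount (2*m+1) (2*m+1-2*a) (lab m a) false + eCount (2*m+1) (2*m+1-2*a) (lab m a) true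
      = (2*m+1) * (2*m+1-2*a) := by
  unfold eCount
  have := bool_split (lab m a)
  simpa [Fintype.card_prod] using this

lemma lab_edgeFriendly : edgeFriendly (2*m+1) (2*m+1-2*a) (lab m a) := by
  unfold edgeFriendly
  have h2 := eCount_total m a ha hm
  have h4 : 2 * eCount (2*m+1) (2*m+1-2*a) (lab m a) false + 1
      = (2*m+1) * (2*m+1-2*a) := by
    rw [eCount_false_val m a ha hm]
    exact arith_e0 m a ha hm
  generalize hP : (2*m+1) * (2*m+1-2*a) = P at h2 h4
  omega

lemma rows_partition (x : Fin (2*m+1)) :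
    (univ.filter fun y => lab m a (x,y) = false).card
      + (univ.filter fun y => lab m a (x,y) = true).card = 2*m+1-2*a := by
  have := bool_split (fun y : Fin (2*m+1-2*a) => lab m a (x,y))
  simpa using this

lemma cols_partition (y : Fin (2*m+1-2*a)) :
    (univ.filter fun x => lab m a (x,y) = false).card
      + (univ.filter fun x => lab m a (x,y) = true).card = 2*m+1 := by
  have := bool_split (fun x : Fin (2*m+1) => lab m a (x,y))
  simpa using this

lemma row_zeros_le (x : Fin (2*m+1)) (hx : 2 ≤ x.val) :
    (univ.filter fun y : Fin (2*m+1-2*a) => lab m a (x,y) = false).card ≤ m - a := by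
  rw [row_zeros_big m a ha hm x hx]
  have hk : kk m a (x.val - 2) ≤ qR m a := Nat.sub_le _ _
  have hq : qR m a = m - a - 1 := rfl
  omega

lemma vCount_false : vCount (2*m+1) (2*m+1-2*a) (lab m a) false = 3 := by
  unfold vCount
  have hrows : (univ.filter fun x : Fin (2*m+1) =>
      (univ.filter fun y => lab m a (x,y) = !false).card <
      (univ.filter fun y => lab m a (x,y) = false).card)
      = univ.filter (fun x : Fin (2*m+1) => x.val < 2) := by
    apply Finset.filter_congr
    intro x _
    simp only [Bool.not_false]
    have hp := rows_partition m a ha hm x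
    by_cases hx : x.val < 2
    · have hz := row_zeros_small m a ha hm x hx
      simp only [hx, iff_true]
      omega
    · have hz := row_zeros_le m a ha hm x (by omega)
      simp only [hx, iff_false, not_lt]
      omega
  have hcols : (univ.filter fun y : Fin (2*m+1-2*a) =>
      (univ.filter fun x => lab m a (x,y) = !false).card <
      (univ.filter fun x => lab m a (x,y) = false).card)
      = univ.filter (fun y : Fin (2*m+1-2*a) => y.val = 0) := by
    apply Finset.filter_congr
    intro y _
    simp only [Bool.not_false]
    have hp := cols_partition m a ha hm y
    by_cases hy : y.val = 0
    · have hz := col_zeros_small m a ha hm y hy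
      simp only [hy, iff_true]
      omega
    · have hz := col_zeros_le m a ha hm y (by omega)
      simp only [hy, iff_false, not_lt]
      omega
  rw [hrows, hcols]
  rw [card_filter_fin (2*m+1) (fun i => i < 2), card_filter_fin (2*m+1-2*a) (fun i => i = 0)]
  have e1 : (range (2*m+1)).filter (fun i => i < 2) = range 2 := by
    ext i; simp only [mem_filter, mem_range]; omega
  have e2 : (range (2*m+1-2*a)).filter (fun i => i = 0) = {0} := by
    ext i; simp only [mem_filter, mem_range, mem_singleton]; omega
  rw [e1, e2, card_range, card_singleton]

lemma vCount_true :
    vCount (2*m+1) (2*m+1-2*a) (lab m a) true = (2*m-1) + (2*m-2*a) := by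
  unfold vCount
  have hrows : (univ.filter fun x : Fin (2*m+1) =>
      (univ.filter fun y => lab m a (x,y) = !true).card <
      (univ.filter fun y => lab m a (x,y) = true).card)
      = univ.filter (fun x : Fin (2*m+1) => 2 ≤ x.val) := by
    apply Finset.filter_congr
    intro x _
    simp only [Bool.not_true]
    have hp := rows_partition m a ha hm x
    by_cases hx : 2 ≤ x.val
    · have hz := row_zeros_le m a ha hm x hx
      simp only [hx, iff_true]
      omega
    · have hz := row_zeros_small m a ha hm x (by omega)
      simp only [hx, iff_false, not_lt]
      omega
  have hcols : (univ.filter fun y : Fin (2*m+1-2*a) =>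
      (univ.filter fun x => lab m a (x,y) = !true).card <
      (univ.filter fun x => lab m a (x,y) = true).card)
      = univ.filter (fun y : Fin (2*m+1-2*a) => 1 ≤ y.val) := by
    apply Finset.filter_congr
    intro y _
    simp only [Bool.not_true]
    have hp := cols_partition m a ha hm y
    by_cases hy : 1 ≤ y.val
    · have hz := col_zeros_le m a ha hm y hy
      simp only [hy, iff_true]
      omega
    · have hz := col_zeros_small m a ha hm y (by omega)
      simp only [hy, iff_false, not_lt]
      omega
  rw [hrows, hcols]
  rw [card_filter_fin (2*m+1) (fun i => 2 ≤ i), card_filter_fin (2*m+1-2*a) (fun i => 1 ≤ i)]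
  have e1 : (range (2*m+1)).filter (fun i => 2 ≤ i) = Finset.Ico 2 (2*m+1) := by
    ext i; simp only [mem_filter, mem_range, mem_Ico]; omega
  have e2 : (range (2*m+1-2*a)).filter (fun i => 1 ≤ i) = Finset.Ico 1 (2*m+1-2*a) := by
    ext i; simp only [mem_filter, mem_range, mem_Ico]; omega
  rw [e1, e2, Nat.card_Ico, Nat.card_Ico]
  omega

end Main

end EBImax


/-- For odd `n > 5` and `1 ≤ a ≤ (n-3)/4`, some edge-friendly labeling of
`K_{n,n-2a}` achieves `|v_f(0) - v_f(1)| = 2n - 2a - 6`. -/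
theorem EBI_general_max (n a : ℕ) (hn : Odd n) (h5 : 5 < n)
    (ha : 1 ≤ a) (han : 4 * a + 3 ≤ n) :
    ∃ f : Fin n × Fin (n - 2 * a) → Bool, edgeFriendly n (n - 2 * a) f ∧
      ebIndex n (n - 2 * a) f = 2 * n - 2 * a - 6 := by
  obtain ⟨m, rfl⟩ := hn
  have hm' : 2*a+1 ≤ m := by omega
  refine ⟨EBImax.lab m a, EBImax.lab_edgeFriendly m a ha hm', ?_⟩
  unfold ebIndex
  rw [EBImax.vCount_false m a ha hm', EBImax.vCount_true m a ha hm']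
  have : (2*m-1) + (2*m-2*a) = 4*m - 2*a - 1 := by omega
  rw [this]
  omega
end

section
/- Lee–Kong–Wang theorem (reference case, odd n): for odd n ≥ 3, EBI(K_{n,n}) = {0, 2, 4, …, 2n − 4}. -/
open Finset

namespace LKW

lemma count_add {α : Type*} (s : Finset α) (g : α → Bool) (i : Bool) :
    (s.filter fun x => g x = !i).card + (s.filter fun x => g x = i).card = s.card := by
  have h := Finset.card_filter_add_card_filter_not (s := s) (p := fun x => g x = i)
  have he : s.filter (fun x => ¬ (g x = i)) = s.filter (fun x => g x = !i) :=
    Finset.filter_congr (fun x _ => by cases i <;> cases g x <;> simp)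
  rw [he] at h
  omega

lemma card_filter_fin (n : ℕ) (p : ℕ → Prop) [DecidablePred p] :
    (univ.filter fun b : Fin n => p b.val).card = ((range n).filter p).card := by
  rw [Finset.card_filter, Finset.card_filter,
    Fin.sum_univ_eq_sum_range (fun i => if p i then 1 else 0)]

lemma card_filter_fin_lt (n B : ℕ) (h : B ≤ n) :
    (univ.filter fun b : Fin n => b.val < B).card = B := by
  rw [card_filter_fin n (fun x => x < B)]
  have : (range n).filter (fun x => x < B) = range B := by
    ext x; simp only [mem_filter, mem_range]; omega
  rw [this, card_range]

lemma eCount_rows (n : ℕ) (f : Fin n × Fin n → Bool) (i : Bool) :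
    eCount n n f i = ∑ a : Fin n, (univ.filter fun b => f (a, b) = i).card := by
  rw [eCount, Finset.card_filter, Fintype.sum_prod_type]
  exact Finset.sum_congr rfl fun a _ => (Finset.card_filter _ _).symm

lemma eCount_cols (n : ℕ) (f : Fin n × Fin n → Bool) (i : Bool) :
    eCount n n f i = ∑ b : Fin n, (univ.filter fun a => f (a, b) = i).card := by
  rw [eCount, Finset.card_filter, Fintype.sum_prod_type_right]
  exact Finset.sum_congr rfl fun b _ => (Finset.card_filter _ _).symm

lemma eCount_add (n : ℕ) (f : Fin n × Fin n → Bool) :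
    eCount n n f false + eCount n n f true = n * n := by
  have := count_add (univ : Finset (Fin n × Fin n)) f true
  simpa [eCount] using this

lemma part_add (n : ℕ) (hn : Odd n) (g : Fin n → Fin n → Bool) :
    (univ.filter fun a : Fin n =>
      (univ.filter fun b => g a b = !false).card < (univ.filter fun b => g a b = false).card).card +
    (univ.filter fun a : Fin n =>
      (univ.filter fun b => g a b = !true).card < (univ.filter fun b => g a b = true).card).card
    = n := by
  obtain ⟨m, hm⟩ := hn
  have key : ∀ a : Fin n,
      ((univ.filter fun b => g a b = !false).card < (univ.filter fun b => g a b = false).card)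
      ↔ ¬ ((univ.filter fun b => g a b = !true).card < (univ.filter fun b => g a b = true).card) := by
    intro a
    have h1 := count_add univ (g a) true
    have h2 : (univ : Finset (Fin n)).card = n := by simp
    simp only [Bool.not_false, Bool.not_true] at *
    omega
  rw [filter_congr (fun a _ => key a)]
  have h := Finset.card_filter_add_card_filter_not (s := (univ : Finset (Fin n)))
    (p := fun a => (univ.filter fun b => g a b = !true).card < (univ.filter fun b => g a b = true).card)
  have h2 : (univ : Finset (Fin n)).card = n := by simp
  omega

lemma vCount_add (n : ℕ) (hn : Odd n) (f : Fin n × Fin n → Bool) :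
    vCount n n f false + vCount n n f true = 2 * n := by
  unfold vCount
  have h1 := part_add n hn (fun a b => f (a, b))
  have h2 := part_add n hn (fun b a => f (a, b))
  omega

lemma vCount_ge_two (n : ℕ) (hn : Odd n) (h3 : 3 ≤ n) (f : Fin n × Fin n → Bool)
    (hef : edgeFriendly n n f) (i : Bool) : 2 ≤ vCount n n f i := by
  obtain ⟨m, hm⟩ := hn
  have hm1 : 1 ≤ m := by omega
  by_contra hcon
  push_neg at hcon
  unfold vCount at hcon
  have hcases : (univ.filter fun a : Fin n =>
      (univ.filter fun b => f (a, b) = !i).card <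
      (univ.filter fun b => f (a, b) = i).card).card = 0 ∨
    (univ.filter fun b : Fin n =>
      (univ.filter fun a => f (a, b) = !i).card <
      (univ.filter fun a => f (a, b) = i).card).card = 0 := by omega
  have hef' := hef
  unfold edgeFriendly at hef'
  have hadd := eCount_add n f
  have hnsq : n * n = 2 * (n * m) + n := by rw [hm]; ring
  rcases hcases with h0 | h0
  · -- no i-majority row
    have hall : ∀ a : Fin n, (univ.filter fun b => f (a, b) = i).card ≤ m := by
      intro a
      have := Finset.filter_eq_empty_iff.mp (Finset.card_eq_zero.mp h0) (Finset.mem_univ a)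
      have h1 := count_add univ (fun b => f (a, b)) i
      have h2 : (univ : Finset (Fin n)).card = n := by simp
      omega
    have hsum : eCount n n f i ≤ n * m := by
      rw [eCount_rows]
      calc ∑ a : Fin n, (univ.filter fun b => f (a, b) = i).card
          ≤ ∑ _a : Fin n, m := Finset.sum_le_sum (fun a _ => hall a)
        _ = n * m := by simp [mul_comm]
    cases i <;> omega
  · -- no i-majority column
    have hall : ∀ b : Fin n, (univ.filter fun a => f (a, b) = i).card ≤ m := by
      intro b
      have := Finset.filter_eq_empty_iff.mp (Finset.card_eq_zero.mp h0) (Finset.mem_univ b)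
      have h1 := count_add univ (fun a => f (a, b)) i
      have h2 : (univ : Finset (Fin n)).card = n := by simp
      omega
    have hsum : eCount n n f i ≤ n * m := by
      rw [eCount_cols]
      calc ∑ b : Fin n, (univ.filter fun a => f (a, b) = i).card
          ≤ ∑ _b : Fin n, m := Finset.sum_le_sum (fun b _ => hall b)
        _ = n * m := by simp [mul_comm]
    cases i <;> omega

lemma subset_dir (n : ℕ) (hn : Odd n) (h3 : 3 ≤ n) (k : ℕ) (hk : k ∈ EBI n n) :
    Even k ∧ k ≤ 2 * n - 4 := by
  obtain ⟨f, hef, hidx⟩ := hk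
  have hadd := vCount_add n hn f
  have h0 := vCount_ge_two n hn h3 f hef false
  have h1 := vCount_ge_two n hn h3 f hef true
  unfold ebIndex at hidx
  constructor
  · rw [Nat.even_iff]; omega
  · omega


section Construction

/-- number of majority-true columns -/
def cc (m s : ℕ) : ℕ := min (s - 1) m
/-- number of majority-true rows -/
def rr (m s : ℕ) : ℕ := s - cc m s
def qq (m s : ℕ) : ℕ := 2 * m + 1 - cc m s
def BB (m s : ℕ) : ℕ := 2 * m + 2 - rr m s
def ww (m s i : ℕ) : ℕ := if i < rr m s then m + 1 - cc m s else m - cc m s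
def SS (m s i : ℕ) : ℕ := ∑ j ∈ Ico 1 i, ww m s j

def FPred (m s x y : ℕ) : Prop :=
  if x = 0 then y < BB m s
  else (y < cc m s ∨ ((y - cc m s) + (qq m s - SS m s x % qq m s)) % qq m s < ww m s x)

instance FPred.dec (m s x y : ℕ) : Decidable (FPred m s x y) := by
  unfold FPred; infer_instance

def FF (m s : ℕ) : Fin (2*m+1) × Fin (2*m+1) → Bool :=
  fun p => decide (FPred m s p.1.val p.2.val)

lemma mod_shift_cancel (q a d : ℕ) (hq : 0 < q) : (a + d + (q - d % q)) % q = a % q := by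
  have h1 : d % q < q := Nat.mod_lt _ hq
  have h2 := Nat.mod_add_div d q
  have h3 : a + d + (q - d % q) = a + q * (d / q) + q := by omega
  rw [h3, Nat.add_mod_right, Nat.add_mul_mod_self_left]

lemma shift_card (q W d : ℕ) (hq : 0 < q) (hW : W ≤ q) :
    ((range q).filter fun v => (v + d) % q < W).card = W := by
  have main : ((range q).filter fun v => (v + d) % q < W).card = (range W).card := by
    apply Finset.card_bij' (fun v _ => (v + d) % q) (fun u _ => (u + (q - d % q)) % q)
    · intro v hv
      simp only [mem_filter, mem_range] at hv
      simpa using hv.2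
    · intro u hu
      simp only [mem_range] at hu
      simp only [mem_filter, mem_range]
      have key : ((u + (q - d % q)) % q + d) % q = u := by
        rw [Nat.mod_add_mod]
        have h : u + (q - d % q) + d = u + d + (q - d % q) := by ring
        rw [h, mod_shift_cancel q u d hq, Nat.mod_eq_of_lt (lt_of_lt_of_le hu hW)]
      exact ⟨Nat.mod_lt _ hq, by rw [key]; exact hu⟩
    · intro v hv
      simp only [mem_filter, mem_range] at hv
      rw [Nat.mod_add_mod, mod_shift_cancel q v d hq, Nat.mod_eq_of_lt hv.1]
    · intro u hu
      simp only [mem_range] at hu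
      rw [Nat.mod_add_mod]
      have h : u + (q - d % q) + d = u + d + (q - d % q) := by ring
      rw [h, mod_shift_cancel q u d hq, Nat.mod_eq_of_lt (lt_of_lt_of_le hu hW)]
  rw [main, card_range]

lemma SS_mono (m s : ℕ) {i i' : ℕ} (h : i ≤ i') : SS m s i ≤ SS m s i' :=
  Finset.sum_le_sum_of_subset (Finset.Ico_subset_Ico le_rfl h)

lemma SS_succ (m s i : ℕ) (hi : 1 ≤ i) : SS m s (i + 1) = SS m s i + ww m s i :=
  Finset.sum_Ico_succ_top hi _

variable {m s : ℕ}

lemma hcc1 (hm : 1 ≤ m) (hs2 : 2 ≤ s) : 1 ≤ cc m s := by unfold cc; omega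
lemma hccm : cc m s ≤ m := by unfold cc; omega
lemma hrr1 (hs2 : 2 ≤ s) : 1 ≤ rr m s := by unfold rr cc; omega
lemma hrrm (hsn : s ≤ 2*m+1) : rr m s ≤ m + 1 := by unfold rr cc; omega
lemma hrcs (hs2 : 2 ≤ s) : rr m s + cc m s = s := by unfold rr cc; omega
lemma hcq : cc m s + qq m s = 2*m+1 := by unfold qq cc; omega
lemma hqpos : 0 < qq m s := by unfold qq cc; omega
lemma hwwq (i : ℕ) : ww m s i ≤ qq m s := by unfold ww qq cc; split <;> omega
lemma hBB1 (hsn : s ≤ 2*m+1) : m + 1 ≤ BB m s := by unfold BB rr cc; omega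
lemma hBB2 (hs2 : 2 ≤ s) : BB m s ≤ 2*m+1 := by unfold BB rr cc; omega

lemma SS_total (hs2 : 2 ≤ s) (hsn : s ≤ 2*m+1) :
    SS m s (2*m+1) = (rr m s - 1) * (m + 1 - cc m s) + (2*m+1 - rr m s) * (m - cc m s) := by
  unfold SS
  rw [← Finset.sum_Ico_consecutive _ (hrr1 hs2) (le_trans (hrrm hsn) (by omega))]
  have h1 : ∑ j ∈ Ico 1 (rr m s), ww m s j = (rr m s - 1) * (m + 1 - cc m s) := by
    rw [Finset.sum_congr rfl (fun j hj => ?_), Finset.sum_const, Nat.card_Ico, smul_eq_mul]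
    unfold ww; rw [if_pos (mem_Ico.mp hj).2]
  have h2 : ∑ j ∈ Ico (rr m s) (2*m+1), ww m s j = (2*m+1 - rr m s) * (m - cc m s) := by
    rw [Finset.sum_congr rfl (fun j hj => ?_), Finset.sum_const, Nat.card_Ico, smul_eq_mul]
    unfold ww; rw [if_neg (not_lt.mpr (mem_Ico.mp hj).1)]
  rw [h1, h2]

lemma SS_le (hm : 2 ≤ m) (hs2 : 2 ≤ s) (hsn : s ≤ 2*m+1) :
    SS m s (2*m+1) ≤ (m - 1) * qq m s := by
  rw [SS_total hs2 hsn]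
  have hq : qq m s = 2*m+1 - cc m s := rfl
  rcases le_or_gt s (m+1) with hcase | hcase
  · have hc : cc m s = s - 1 := by unfold cc; omega
    have hr : rr m s = 1 := by unfold rr cc; omega
    rw [hr, hc, hq, hc]
    have h1 : 1 ≤ s - 1 := by omega
    have h2 : s - 1 ≤ m := by omega
    zify [h1, h2, show s - 1 ≤ 2*m+1 by omega, show s - 1 ≤ m + 1 by omega,
      show (1:ℕ) ≤ m by omega, show (1:ℕ) ≤ 1 by omega, show (1:ℕ) ≤ s by omega,
      show (1:ℕ) ≤ 2*m+1 by omega]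
    have key : (0:ℤ) ≤ ((m:ℤ) + 1) * ((s:ℤ) - 2) :=
      mul_nonneg (by omega) (by omega)
    nlinarith [key]
  · have hc : cc m s = m := by unfold cc; omega
    have hr : rr m s = s - m := by unfold rr; rw [hc]
    rw [hr, hc, hq, hc]
    have h1 : m + 1 - m = 1 := by omega
    have h2 : m - m = 0 := by omega
    rw [h1, h2, mul_zero, mul_one, add_zero]
    have h3 : 2*m+1-m = m+1 := by omega
    rw [h3]
    have : s - m - 1 ≤ m := by omega
    calc s - m - 1 ≤ m := this
      _ ≤ (m-1) * (m+1) := by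
          zify [show (1:ℕ) ≤ m by omega]
          have hm' : (2:ℤ) ≤ (m:ℤ) := by exact_mod_cast hm
          nlinarith [hm']

lemma or_filter_card (n C q D W : ℕ) (hn : C + q = n) (hq : 0 < q) (hW : W ≤ q) :
    ((range n).filter fun y => (y < C ∨ (y - C + D) % q < W)).card = C + W := by
  have hdisj : Disjoint ((range n).filter fun y => y < C)
      ((range n).filter fun y => C ≤ y ∧ (y - C + D) % q < W) := by
    rw [Finset.disjoint_left]
    intro y h1 h2
    simp only [mem_filter] at h1 h2
    omega
  have hsplit : (range n).filter (fun y => (y < C ∨ (y - C + D) % q < W))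
      = ((range n).filter fun y => y < C) ∪
        ((range n).filter fun y => C ≤ y ∧ (y - C + D) % q < W) := by
    ext y
    simp only [mem_filter, mem_union, mem_range]
    constructor
    · rintro ⟨hy, h | h⟩
      · exact Or.inl ⟨hy, h⟩
      · rcases lt_or_ge y C with h' | h'
        · exact Or.inl ⟨hy, h'⟩
        · exact Or.inr ⟨hy, h', h⟩
    · rintro (⟨hy, h⟩ | ⟨hy, h1, h2⟩)
      · exact ⟨hy, Or.inl h⟩
      · exact ⟨hy, Or.inr h2⟩
  have c1 : ((range n).filter fun y => y < C).card = C := by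
    have he : (range n).filter (fun y => y < C) = range C := by
      ext y; simp only [mem_filter, mem_range]; omega
    rw [he, card_range]
  have c2 : ((range n).filter fun y => C ≤ y ∧ (y - C + D) % q < W).card = W := by
    have himg : (range n).filter (fun y => C ≤ y ∧ (y - C + D) % q < W)
        = ((range q).filter fun v => (v + D) % q < W).image (· + C) := by
      ext y
      simp only [mem_filter, mem_image, mem_range]
      constructor
      · rintro ⟨hy, h1, h2⟩
        exact ⟨y - C, ⟨by omega, by rwa [show y - C + D = y - C + D from rfl]⟩, by omega⟩
      · rintro ⟨v, ⟨hv, hvW⟩, rfl⟩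
        refine ⟨by omega, by omega, ?_⟩
        rw [show v + C - C = v by omega]
        exact hvW
    rw [himg, Finset.card_image_of_injective _ (add_left_injective C),
      shift_card q W D hq hW]
  rw [hsplit, card_union_of_disjoint hdisj, c1, c2]

end Construction

section Construction2

lemma circ_bound_gen (n q M : ℕ) (w S : ℕ → ℕ) (hq : 0 < q)
    (hmono : ∀ ⦃i j : ℕ⦄, i ≤ j → S i ≤ S j)
    (hsucc : ∀ i, 1 ≤ i → S (i+1) = S i + w i)
    (hSn : S n ≤ M * q) (v : ℕ) (hv : v < q) :
    ((range n).filter fun x => 1 ≤ x ∧ (v + (q - S x % q)) % q < w x).card ≤ M := by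
  classical
  have htmod : ∀ x : ℕ, (S x + (v + (q - S x % q)) % q) % q = v := by
    intro x
    rw [Nat.add_mod_mod]
    have h : S x + (v + (q - S x % q)) = v + S x + (q - S x % q) := by ring
    rw [h, mod_shift_cancel q v (S x) hq, Nat.mod_eq_of_lt hv]
  have hlt : ∀ x, x ∈ ((range n).filter fun x => 1 ≤ x ∧ (v + (q - S x % q)) % q < w x) →
      S x + (v + (q - S x % q)) % q < S (x+1) ∧ x + 1 ≤ n := by
    intro x hx
    simp only [mem_filter, mem_range] at hx
    obtain ⟨hxn, hx1, hcond⟩ := hx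
    constructor
    · rw [hsucc x hx1]; omega
    · omega
  have main : ((range n).filter fun x => 1 ≤ x ∧ (v + (q - S x % q)) % q < w x).card
      ≤ (range M).card := by
    apply Finset.card_le_card_of_injOn
      (fun x => (S x + (v + (q - S x % q)) % q) / q) ?mem ?inj
    case mem =>
      intro x hx
      have h1 := hlt x hx
      have h2 : S (x+1) ≤ S n := hmono h1.2
      rw [Finset.mem_coe, mem_range]
      exact (Nat.div_lt_iff_lt_mul hq).mpr (by omega)
    case inj =>
      intro x hx y hy heq
      simp only [Finset.coe_filter, Set.mem_setOf_eq, mem_range] at hx hy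
      have hx' : x ∈ (range n).filter fun x => 1 ≤ x ∧ (v + (q - S x % q)) % q < w x := by
        simp only [mem_filter, mem_range]; exact ⟨hx.1, hx.2⟩
      have hy' : y ∈ (range n).filter fun x => 1 ≤ x ∧ (v + (q - S x % q)) % q < w x := by
        simp only [mem_filter, mem_range]; exact ⟨hy.1, hy.2⟩
      have ex : S x + (v + (q - S x % q)) % q
          = q * ((S x + (v + (q - S x % q)) % q) / q) + v := by
        conv_lhs => rw [← Nat.div_add_mod (S x + (v + (q - S x % q)) % q) q]
        rw [htmod x]
      have ey : S y + (v + (q - S y % q)) % q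
          = q * ((S y + (v + (q - S y % q)) % q) / q) + v := by
        conv_lhs => rw [← Nat.div_add_mod (S y + (v + (q - S y % q)) % q) q]
        rw [htmod y]
      have heq2 : (S x + (v + (q - S x % q)) % q) / q
          = (S y + (v + (q - S y % q)) % q) / q := heq
      have hteq : S x + (v + (q - S x % q)) % q = S y + (v + (q - S y % q)) % q := by
        rw [ex, ey, heq2]
      rcases lt_trichotomy x y with h | h | h
      · exfalso
        have h1 := (hlt x hx').1
        have h2 : S (x+1) ≤ S y := hmono (by omega)
        omega
      · exact h
      · exfalso
        have h1 := (hlt y hy').1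
        have h2 : S (y+1) ≤ S x := hmono (by omega)
        omega
  simpa using main

variable {m s : ℕ}

lemma row_count (hm : 2 ≤ m) (hs2 : 2 ≤ s) (hsn : s ≤ 2*m+1) (a : Fin (2*m+1)) :
    (univ.filter fun b => FF m s (a, b) = true).card
      = if a.val = 0 then BB m s else cc m s + ww m s a.val := by
  have he : (univ.filter fun b => FF m s (a, b) = true)
      = univ.filter fun b : Fin (2*m+1) => FPred m s a.val b.val :=
    filter_congr fun b _ => by simp [FF]
  rw [he, card_filter_fin (2*m+1) (fun y => FPred m s a.val y)]
  rcases Nat.eq_zero_or_pos a.val with h0 | hpos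
  · rw [if_pos h0]
    have he2 : ((range (2*m+1)).filter fun y => FPred m s a.val y)
        = (range (2*m+1)).filter fun y => y < BB m s :=
      filter_congr fun y _ => by unfold FPred; rw [if_pos h0]
    rw [he2]
    have hb := hBB2 (m := m) hs2
    have he3 : (range (2*m+1)).filter (fun y => y < BB m s) = range (BB m s) := by
      ext y; simp only [mem_filter, mem_range]; omega
    rw [he3, card_range]
  · rw [if_neg (by omega)]
    have he2 : ((range (2*m+1)).filter fun y => FPred m s a.val y)
        = (range (2*m+1)).filter fun y =>
            (y < cc m s ∨ (y - cc m s + (qq m s - SS m s a.val % qq m s)) % qq m s < ww m s a.val) :=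
      filter_congr fun y _ => by unfold FPred; rw [if_neg (by omega)]
    rw [he2, or_filter_card (2*m+1) (cc m s) (qq m s) _ (ww m s a.val) hcq hqpos (hwwq _)]

lemma col_count_lo (hs2 : 2 ≤ s) (hsn : s ≤ 2*m+1) (j : Fin (2*m+1)) (hj : j.val < cc m s) :
    (univ.filter fun a => FF m s (a, j) = true).card = 2*m+1 := by
  have he : (univ.filter fun a => FF m s (a, j) = true) = (univ : Finset (Fin (2*m+1))) := by
    rw [Finset.filter_eq_self]
    intro a _
    simp only [FF, decide_eq_true_eq]
    unfold FPred
    split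
    · have h1 := hBB1 (m := m) (s := s) hsn
      have h2 := hccm (m := m) (s := s)
      omega
    · exact Or.inl hj
  rw [he, card_univ, Fintype.card_fin]

lemma col_count_hi (hm : 2 ≤ m) (hs2 : 2 ≤ s) (hsn : s ≤ 2*m+1) (j : Fin (2*m+1))
    (hj : cc m s ≤ j.val) :
    (univ.filter fun a => FF m s (a, j) = true).card ≤ m := by
  have he : (univ.filter fun a => FF m s (a, j) = true)
      = univ.filter fun a : Fin (2*m+1) => FPred m s a.val j.val :=
    filter_congr fun a _ => by simp [FF]
  rw [he, card_filter_fin (2*m+1) (fun x => FPred m s x j.val)]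
  have hsub : ((range (2*m+1)).filter fun x => FPred m s x j.val)
      ⊆ insert 0 ((range (2*m+1)).filter fun x => 1 ≤ x ∧
          (j.val - cc m s + (qq m s - SS m s x % qq m s)) % qq m s < ww m s x) := by
    intro x hx
    simp only [mem_filter, mem_range] at hx
    obtain ⟨hxn, hP⟩ := hx
    rcases Nat.eq_zero_or_pos x with h0 | h1
    · rw [h0]; exact mem_insert_self 0 _
    · apply mem_insert_of_mem
      simp only [mem_filter, mem_range]
      unfold FPred at hP; rw [if_neg (by omega)] at hP
      rcases hP with h | h
      · omega
      · exact ⟨hxn, h1, h⟩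
  have hv : j.val - cc m s < qq m s := by
    have h1 := hcq (m := m) (s := s)
    have h2 := j.isLt
    omega
  have hcirc : ((range (2*m+1)).filter fun x => 1 ≤ x ∧
      (j.val - cc m s + (qq m s - SS m s x % qq m s)) % qq m s < ww m s x).card ≤ m - 1 :=
    circ_bound_gen (2*m+1) (qq m s) (m-1) (ww m s) (SS m s) hqpos
      (fun i k hik => SS_mono m s hik) (SS_succ m s) (SS_le hm hs2 hsn)
      (j.val - cc m s) hv
  calc ((range (2*m+1)).filter fun x => FPred m s x j.val).card
      ≤ _ := card_le_card hsub
    _ ≤ _ + 1 := card_insert_le _ _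
    _ ≤ m := by omega

end Construction2

section Construction3

variable {m s : ℕ}

lemma rowval (hm : 2 ≤ m) (hs2 : 2 ≤ s) (hsn : s ≤ 2*m+1) (a : Fin (2*m+1)) :
    (univ.filter fun b => FF m s (a, b) = true).card
      = if a.val < rr m s then (if a.val = 0 then BB m s else m + 1) else m := by
  rw [row_count hm hs2 hsn a]
  have h1 := hrr1 (m := m) hs2
  have h3 := hccm (m := m) (s := s)
  rcases Nat.eq_zero_or_pos a.val with h0 | hpos
  · rw [if_pos h0, if_pos (by omega), if_pos h0]
  · rw [if_neg (by omega)]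
    unfold ww
    rcases lt_or_ge a.val (rr m s) with h6 | h6
    · rw [if_pos h6, if_pos h6, if_neg (by omega)]
      omega
    · rw [if_neg (not_lt.mpr h6), if_neg (not_lt.mpr h6)]
      omega

lemma key_row_true (hm : 2 ≤ m) (hs2 : 2 ≤ s) (hsn : s ≤ 2*m+1) (a : Fin (2*m+1)) :
    ((univ.filter fun b => FF m s (a, b) = false).card <
     (univ.filter fun b => FF m s (a, b) = true).card) ↔ a.val < rr m s := by
  have hadd := count_add (univ : Finset (Fin (2*m+1))) (fun b => FF m s (a, b)) true
  simp only [Bool.not_true] at hadd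
  have hcard : (univ : Finset (Fin (2*m+1))).card = 2*m+1 := by simp
  have hv := rowval hm hs2 hsn a
  have h4 := hBB1 (m := m) (s := s) hsn
  have h5 := hBB2 (m := m) hs2
  rcases lt_or_ge a.val (rr m s) with h | h
  · rw [if_pos h] at hv
    have hge : m + 1 ≤ (univ.filter fun b => FF m s (a, b) = true).card := by
      split at hv <;> omega
    simp only [h, iff_true]
    omega
  · rw [if_neg (not_lt.mpr h)] at hv
    simp only [not_lt.mpr h, iff_false]
    omega

lemma key_row_false (hm : 2 ≤ m) (hs2 : 2 ≤ s) (hsn : s ≤ 2*m+1) (a : Fin (2*m+1)) :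
    ((univ.filter fun b => FF m s (a, b) = true).card <
     (univ.filter fun b => FF m s (a, b) = false).card) ↔ rr m s ≤ a.val := by
  have hadd := count_add (univ : Finset (Fin (2*m+1))) (fun b => FF m s (a, b)) true
  simp only [Bool.not_true] at hadd
  have hcard : (univ : Finset (Fin (2*m+1))).card = 2*m+1 := by simp
  have hv := rowval hm hs2 hsn a
  have h4 := hBB1 (m := m) (s := s) hsn
  have h5 := hBB2 (m := m) hs2
  rcases lt_or_ge a.val (rr m s) with h | h
  · rw [if_pos h] at hv
    have hge : m + 1 ≤ (univ.filter fun b => FF m s (a, b) = true).card := by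
      split at hv <;> omega
    constructor
    · intro hc; omega
    · intro hc; omega
  · rw [if_neg (not_lt.mpr h)] at hv
    constructor
    · intro _; exact h
    · intro _; omega

lemma key_col_true (hm : 2 ≤ m) (hs2 : 2 ≤ s) (hsn : s ≤ 2*m+1) (j : Fin (2*m+1)) :
    ((univ.filter fun a => FF m s (a, j) = false).card <
     (univ.filter fun a => FF m s (a, j) = true).card) ↔ j.val < cc m s := by
  have hadd := count_add (univ : Finset (Fin (2*m+1))) (fun a => FF m s (a, j)) true
  simp only [Bool.not_true] at hadd
  have hcard : (univ : Finset (Fin (2*m+1))).card = 2*m+1 := by simp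
  rcases lt_or_ge j.val (cc m s) with h | h
  · have := col_count_lo hs2 hsn j h
    simp only [h, iff_true]
    omega
  · have := col_count_hi hm hs2 hsn j h
    constructor
    · intro hc; omega
    · intro hc; omega

lemma key_col_false (hm : 2 ≤ m) (hs2 : 2 ≤ s) (hsn : s ≤ 2*m+1) (j : Fin (2*m+1)) :
    ((univ.filter fun a => FF m s (a, j) = true).card <
     (univ.filter fun a => FF m s (a, j) = false).card) ↔ cc m s ≤ j.val := by
  have hadd := count_add (univ : Finset (Fin (2*m+1))) (fun a => FF m s (a, j)) true
  simp only [Bool.not_true] at hadd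
  have hcard : (univ : Finset (Fin (2*m+1))).card = 2*m+1 := by simp
  rcases lt_or_ge j.val (cc m s) with h | h
  · have := col_count_lo hs2 hsn j h
    constructor
    · intro hc; omega
    · intro hc; omega
  · have := col_count_hi hm hs2 hsn j h
    constructor
    · intro _; exact h
    · intro _; omega

lemma card_filter_fin_ge (n B : ℕ) (h : B ≤ n) :
    (univ.filter fun b : Fin n => B ≤ b.val).card = n - B := by
  rw [card_filter_fin n (fun x => B ≤ x)]
  have he : (range n).filter (fun x => B ≤ x) = Ico B n := by
    ext x; simp only [mem_filter, mem_range, mem_Ico]; omega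
  rw [he, Nat.card_Ico]

lemma vCount_true_FF (hm : 2 ≤ m) (hs2 : 2 ≤ s) (hsn : s ≤ 2*m+1) :
    vCount (2*m+1) (2*m+1) (FF m s) true = s := by
  unfold vCount
  have e1 : (univ.filter fun a : Fin (2*m+1) =>
      (univ.filter fun b => FF m s (a, b) = !true).card <
      (univ.filter fun b => FF m s (a, b) = true).card)
      = univ.filter fun a : Fin (2*m+1) => a.val < rr m s :=
    filter_congr fun a _ => by
      simp only [Bool.not_true]; exact key_row_true hm hs2 hsn a
  have e2 : (univ.filter fun j : Fin (2*m+1) =>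
      (univ.filter fun a => FF m s (a, j) = !true).card <
      (univ.filter fun a => FF m s (a, j) = true).card)
      = univ.filter fun j : Fin (2*m+1) => j.val < cc m s :=
    filter_congr fun j _ => by
      simp only [Bool.not_true]; exact key_col_true hm hs2 hsn j
  rw [e1, e2, card_filter_fin_lt (2*m+1) (rr m s) (by have := hrrm (m := m) (s := s) hsn; omega),
    card_filter_fin_lt (2*m+1) (cc m s) (by have := hccm (m := m) (s := s); omega)]
  exact hrcs hs2

lemma vCount_false_FF (hm : 2 ≤ m) (hs2 : 2 ≤ s) (hsn : s ≤ 2*m+1) :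
    vCount (2*m+1) (2*m+1) (FF m s) false = 2*(2*m+1) - s := by
  unfold vCount
  have e1 : (univ.filter fun a : Fin (2*m+1) =>
      (univ.filter fun b => FF m s (a, b) = !false).card <
      (univ.filter fun b => FF m s (a, b) = false).card)
      = univ.filter fun a : Fin (2*m+1) => rr m s ≤ a.val :=
    filter_congr fun a _ => by
      simp only [Bool.not_false]; exact key_row_false hm hs2 hsn a
  have e2 : (univ.filter fun j : Fin (2*m+1) =>
      (univ.filter fun a => FF m s (a, j) = !false).card <
      (univ.filter fun a => FF m s (a, j) = false).card)
      = univ.filter fun j : Fin (2*m+1) => cc m s ≤ j.val :=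
    filter_congr fun j _ => by
      simp only [Bool.not_false]; exact key_col_false hm hs2 hsn j
  rw [e1, e2, card_filter_fin_ge (2*m+1) (rr m s) (by have := hrrm (m := m) (s := s) hsn; omega),
    card_filter_fin_ge (2*m+1) (cc m s) (by have := hccm (m := m) (s := s); omega)]
  have h1 := hrr1 (m := m) hs2
  have h2 := hrrm (m := m) (s := s) hsn
  have h3 := hccm (m := m) (s := s)
  have h4 := hrcs (m := m) hs2
  omega

lemma eCount_FF (hm : 2 ≤ m) (hs2 : 2 ≤ s) (hsn : s ≤ 2*m+1) :
    eCount (2*m+1) (2*m+1) (FF m s) true = 2*(m*m) + 2*m + 1 := by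
  rw [eCount_rows]
  calc (∑ a : Fin (2*m+1), (univ.filter fun b => FF m s (a, b) = true).card)
      = ∑ a : Fin (2*m+1), (if a.val = 0 then BB m s else cc m s + ww m s a.val) :=
        Finset.sum_congr rfl fun a _ => row_count hm hs2 hsn a
    _ = ∑ x ∈ range (2*m+1), (if x = 0 then BB m s else cc m s + ww m s x) :=
        Fin.sum_univ_eq_sum_range (fun x => if x = 0 then BB m s else cc m s + ww m s x) (2*m+1)
    _ = BB m s + ∑ x ∈ Ico 1 (2*m+1), (cc m s + ww m s x) := by
        rw [range_eq_Ico, ← Finset.sum_Ico_consecutive _ (Nat.zero_le 1) (show 1 ≤ 2*m+1 by omega)]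
        have g1 : ∑ x ∈ Ico 0 1, (if x = 0 then BB m s else cc m s + ww m s x) = BB m s := by
          have he : (Ico 0 1 : Finset ℕ) = {0} := by ext x; simp [mem_Ico]
          rw [he, Finset.sum_singleton, if_pos rfl]
        have g2 : ∑ x ∈ Ico 1 (2*m+1), (if x = 0 then BB m s else cc m s + ww m s x)
            = ∑ x ∈ Ico 1 (2*m+1), (cc m s + ww m s x) :=
          Finset.sum_congr rfl fun x hx => by
            rw [if_neg (by have := (mem_Ico.mp hx).1; omega)]
        rw [g1, g2]
    _ = BB m s + ((2*m+1 - 1) * cc m s + SS m s (2*m+1)) := by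
        rw [Finset.sum_add_distrib, Finset.sum_const, Nat.card_Ico, smul_eq_mul]
        rfl
    _ = 2*(m*m) + 2*m + 1 := by
        rw [SS_total hs2 hsn]
        have h1 := hrr1 (m := m) hs2
        have h2 := hrrm (m := m) (s := s) hsn
        have h3 := hccm (m := m) (s := s)
        unfold BB
        zify [h3, show cc m s ≤ m + 1 by omega, show 1 ≤ rr m s from h1,
          show rr m s ≤ 2*m+1 by omega, show rr m s ≤ 2*m+2 by omega,
          show (1:ℕ) ≤ 2*m+1 by omega]
        ring

lemma edgeFriendly_FF (hm : 2 ≤ m) (hs2 : 2 ≤ s) (hsn : s ≤ 2*m+1) :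
    edgeFriendly (2*m+1) (2*m+1) (FF m s) := by
  unfold edgeFriendly
  have h1 := eCount_FF hm hs2 hsn
  have h2 := eCount_add (2*m+1) (FF m s)
  have h3 : (2*m+1) * (2*m+1) = 4*(m*m) + 4*m + 1 := by ring
  rw [h3] at h2
  generalize m*m = M at h1 h2
  omega

lemma construct (m s : ℕ) (hm : 2 ≤ m) (hs2 : 2 ≤ s) (hsn : s ≤ 2*m+1) :
    2*(2*m+1) - 2*s ∈ EBI (2*m+1) (2*m+1) := by
  refine ⟨FF m s, edgeFriendly_FF hm hs2 hsn, ?_⟩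
  unfold ebIndex
  rw [vCount_true_FF hm hs2 hsn, vCount_false_FF hm hs2 hsn]
  omega

end Construction3
end LKW


/-- Lee–Kong–Wang: for odd `n ≥ 3`, `EBI(K_{n,n}) = {0, 2, 4, …, 2n - 4}`. -/
theorem EBI_Knn_odd (n : ℕ) (hn : Odd n) (h3 : 3 ≤ n) :
    EBI n n = {k : ℕ | Even k ∧ k ≤ 2 * n - 4} := by
  ext k
  simp only [Set.mem_setOf_eq]
  constructor
  · exact LKW.subset_dir n hn h3 k
  · rintro ⟨hke, hkle⟩
    obtain ⟨m, hm⟩ := hn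
    obtain ⟨t, ht⟩ := hke
    rcases Nat.lt_or_ge m 2 with hm2 | hm2
    · -- n = 3
      have hn3 : n = 3 := by omega
      subst hn3
      have : k = 0 ∨ k = 2 := by omega
      rcases this with rfl | rfl
      · exact ⟨fun p => decide (p.2.val = 0 ∨ (p.1.val = 0 ∧ p.2.val = 1) ∨
          (p.1.val = 1 ∧ p.2.val = 2)),
          by unfold edgeFriendly; decide, by unfold ebIndex; decide⟩
      · exact ⟨fun p => decide (p.1.val = 0 ∨ p.2.val = 0),
          by unfold edgeFriendly; decide, by unfold ebIndex; decide⟩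
    · -- n ≥ 5
      have hle : t ≤ n - 2 := by omega
      have hcon := LKW.construct m (n - t) hm2 (by omega) (by omega)
      have heq : 2*(2*m+1) - 2*(n - t) = k := by omega
      rw [heq] at hcon
      rw [hm]
      exact hcon
end
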